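/- The map φ from the set P_n of primitive words of length n to W_n, sending w to itself if w ∈ W_n and otherwise to the unique rotation of w beginning with the last run of the smallest letter of w, is surjective, and for each w ∈ W_n the preimage φ^{-1}({w}) has cardinality equal to the length of the first block of w. -/

import Mathlib

/-!
A primitive word of length `n` has `n` distinct rotations, and `phi` sends every word to one of
its rotations, so the preimage of `w ∈ W_n` consists of rotations `w.rotate r`. Let `B` be the
first block of `w` and `a` its smallest letter. For `0 < r < |B|` the cut falls inside `B`, so
`w.rotate r` starts with a letter `≠ a` or ends with `a`; it lies outside `W_n`, and its last run
of `a` is the one where `w` begins, so `phi` returns `w`. For `r = |B|` the rotation moves `B` to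
the end and stays in `W_n`, and for `r > |B|` the start of the second block of `w` is a later run
of `a`. Hence the preimage is `{w.rotate r | r < |B|}`, of cardinality `|B|`.
-/

open List

variable {A : Type*}

/-- A word is primitive if it is nonempty and not a power `u^r` with `r ≥ 2`. -/
def Primitive (w : List A) : Prop :=
  w ≠ [] ∧ ∀ (u : List A) (r : ℕ), 2 ≤ r → w ≠ (List.replicate r u).flatten

/-- A block with respect to the letter `a`: an initial run of `a`'s followed by
a nonempty word containing no `a`. -/
def IsBlock (a : A) (B : List A) : Prop :=
  ∃ (k : ℕ) (t : List A), 0 < k ∧ t ≠ [] ∧ a ∉ t ∧ B = List.replicate k a ++ t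

/-- `Bs` is the block decomposition of `w` with respect to the letter `a`. -/
def IsBlockDecomp (a : A) (Bs : List (List A)) (w : List A) : Prop :=
  w = Bs.flatten ∧ ∀ B ∈ Bs, IsBlock a B

/-- `a` is the smallest letter of the word `w`. -/
def Smallest [LinearOrder A] (a : A) (w : List A) : Prop :=
  a ∈ w ∧ ∀ b ∈ w, a ≤ b

/-- Membership in `W`: a primitive word beginning with a run of its smallest letter
and ending with a letter different from the smallest (equivalently, admitting a
block decomposition with respect to its smallest letter). -/
def InW [LinearOrder A] (w : List A) : Prop :=
  Primitive w ∧ ∃ (a : A) (Bs : List (List A)), Smallest a w ∧ IsBlockDecomp a Bs w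

/-- The class `C(w)`: all words of `W` obtained by permuting the blocks `Bs` of `w`. -/
def classOf [LinearOrder A] (Bs : List (List A)) : Set (List A) :=
  {v | ∃ σ : Equiv.Perm (Fin Bs.length),
        v = (List.ofFn (fun t => Bs.get (σ t))).flatten ∧ InW v}

/-- The block orbit of a word with block decomposition `Cs`: all cyclic shifts of
its blocks. -/
def blockOrbit (Cs : List (List A)) : Set (List A) :=
  {v | ∃ i, v = (Cs.rotate i).flatten}

open scoped Classical in
/-- The map `φ` on primitive words: the identity on `W_n`, and otherwise the rotation
of `v` beginning with the last run of the smallest letter of `v`. -/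
noncomputable def phi [LinearOrder A] (v : List A) : List A :=
  if InW v then v
  else v.rotate (sSup {i | i < v.length ∧ ∃ a, Smallest a v ∧ v[i]? = some a ∧
    (i = 0 ∨ v[i - 1]? ≠ some a)})

namespace List

theorem rotate_one_iterate (w : List A) (d : ℕ) :
    (fun l : List A => l.rotate 1)^[d] w = w.rotate d := by
  induction d with
  | zero => simp
  | succ d ih => rw [Function.iterate_succ_apply', ih, rotate_rotate]

theorem isPeriodicPt_rotate_one_iff {w : List A} {d : ℕ} :
    Function.IsPeriodicPt (fun l : List A => l.rotate 1) d w ↔ w.rotate d = w := by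
  rw [Function.IsPeriodicPt, Function.IsFixedPt, rotate_one_iterate]

theorem rotate_flatten_replicate_length (u : List A) (r : ℕ) :
    (replicate r u).flatten.rotate u.length = (replicate r u).flatten := by
  cases r with
  | zero => simp
  | succ r =>
    conv_lhs => rw [replicate_succ, flatten_cons, rotate_append_length_eq]
    rw [replicate_succ', flatten_append, flatten_singleton]

theorem eq_flatten_replicate_take_of_rotate_eq {w : List A} {d m : ℕ} (h : w.rotate d = w)
    (hm : w.length = m * d) : w = (replicate m (w.take d)).flatten := by
  have hper := isPeriodicPt_rotate_one_iff.mpr h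
  suffices H : ∀ j ≤ m, w = (replicate j (w.take d)).flatten ++ w.drop (j * d) by
    simpa [drop_eq_nil_of_le hm.le] using H m le_rfl
  intro j hj
  induction j with
  | zero => simp
  | succ j ih =>
    have hjd : w.rotate (d * j) = w := isPeriodicPt_rotate_one_iff.mp (hper.mul_const j)
    have hjm : j * d + d ≤ w.length := by
      rw [hm, ← Nat.succ_mul]; exact Nat.mul_le_mul_right d hj
    have htake : (w.drop (j * d)).take d = w.take d := by
      conv_rhs => rw [← hjd, rotate_eq_drop_append_take (by rw [mul_comm]; omega), mul_comm,
        take_append_of_le_length (by rw [length_drop]; omega)]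
    calc w = (replicate j (w.take d)).flatten ++ w.drop (j * d) := ih (by omega)
      _ = _ := by
        rw [← take_append_drop d (w.drop (j * d)), htake, drop_drop, replicate_succ',
          flatten_append, flatten_singleton, append_assoc, Nat.succ_mul]

theorem getElem?_rotate_of_add_lt {w : List A} {r p : ℕ} (h : p + r < w.length) :
    (w.rotate r)[p]? = w[p + r]? := by
  rw [getElem?_rotate (by omega), Nat.mod_eq_of_lt h]

theorem getElem?_rotate_of_le_add {w : List A} {r p : ℕ} (hp : p < w.length)
    (hr : r ≤ w.length) (h : w.length ≤ p + r) : (w.rotate r)[p]? = w[p + r - w.length]? := by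
  rw [getElem?_rotate hp, Nat.mod_eq_sub_mod h, Nat.mod_eq_of_lt (by omega)]

end List

theorem primitive_iff_rotate_ne {w : List A} :
    Primitive w ↔ w ≠ [] ∧ ∀ d, 0 < d → d < w.length → w.rotate d ≠ w := by
  constructor
  · intro hw
    refine ⟨hw.1, fun d hd hdn hrot => ?_⟩
    set g := d.gcd w.length
    have hg : w.rotate g = w := List.isPeriodicPt_rotate_one_iff.mp
      ((List.isPeriodicPt_rotate_one_iff.mpr hrot).gcd
        (List.isPeriodicPt_rotate_one_iff.mpr (List.rotate_length w)))
    have hgpos : 0 < g := Nat.gcd_pos_of_pos_left _ hd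
    have hgd : g ≤ d := Nat.gcd_le_left _ hd
    obtain ⟨m, hm⟩ := Nat.gcd_dvd_right d w.length
    refine hw.2 _ m ?_ (List.eq_flatten_replicate_take_of_rotate_eq hg (by rw [hm, mul_comm]))
    by_contra! hm2
    interval_cases m <;> omega
  · rintro ⟨hne, hrot⟩
    refine ⟨hne, fun u r hr hpow => ?_⟩
    have hlen : w.length = r * u.length := by simp [hpow]
    have hu : 0 < u.length :=
      Nat.pos_of_ne_zero fun h => hne (List.length_eq_zero_iff.mp (by rw [hlen, h, mul_zero]))
    refine hrot u.length hu (by rw [hlen]; nlinarith) ?_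
    rw [hpow]
    exact List.rotate_flatten_replicate_length u r

theorem Primitive.rotate {w : List A} (hw : Primitive w) (i : ℕ) : Primitive (w.rotate i) := by
  rw [primitive_iff_rotate_ne] at hw ⊢
  refine ⟨by simpa [List.rotate_eq_nil_iff] using hw.1, fun d hd hdn h => ?_⟩
  rw [List.length_rotate] at hdn
  rw [List.rotate_rotate, add_comm, ← List.rotate_rotate, List.rotate_eq_rotate] at h
  exact hw.2 d hd hdn h

theorem Primitive.injOn_rotate {w : List A} (hw : Primitive w) :
    Set.InjOn w.rotate (Set.Iio w.length) := by
  intro i hi j hj hij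
  wlog hle : i ≤ j generalizing i j
  · exact (this hj hi hij.symm (by omega)).symm
  by_contra hne
  simp only [Set.mem_Iio] at hj
  refine (primitive_iff_rotate_ne.mp hw).2 (j - i) (by omega) (by omega) ?_
  rw [← List.rotate_eq_rotate (n := i), List.rotate_rotate, Nat.sub_add_cancel hle]
  exact hij.symm

namespace IsBlock

variable {a : A} {B : List A}

theorem ne_nil (h : IsBlock a B) : B ≠ [] := by
  obtain ⟨k, t, -, ht, -, rfl⟩ := h
  simp [ht]

theorem getLast?_ne (h : IsBlock a B) : B.getLast? ≠ some a := by
  obtain ⟨k, t, -, ht, hat, rfl⟩ := h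
  rw [List.getLast?_append_of_ne_nil _ ht]
  exact fun hc => hat (List.mem_of_getLast? hc)

theorem head?_eq (h : IsBlock a B) : B.head? = some a := by
  obtain ⟨k, t, hk, -, -, rfl⟩ := h
  obtain ⟨k, rfl⟩ := Nat.exists_eq_add_of_lt hk
  simp [List.replicate_succ]

theorem getElem?_sub_one (h : IsBlock a B) {q : ℕ} (hq : 0 < q) (hBq : B[q]? = some a) :
    B[q - 1]? = some a := by
  obtain ⟨k, t, -, -, hat, rfl⟩ := h
  rw [List.getElem?_append] at hBq ⊢
  by_cases hqk : q < k
  · simp [show q - 1 < k by omega]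
  · rw [if_neg (by simpa using hqk)] at hBq
    exact absurd (List.mem_of_getElem? hBq) hat

end IsBlock

namespace IsBlockDecomp

variable {a : A} {w B : List A} {Bs : List (List A)}

theorem head?_eq (h : IsBlockDecomp a Bs w) (hw : w ≠ []) : w.head? = some a := by
  obtain ⟨rfl, hBs⟩ := h
  cases Bs with
  | nil => simp at hw
  | cons C Cs =>
    rw [List.flatten_cons, List.head?_append_of_ne_nil _ (hBs C (by simp)).ne_nil]
    exact (hBs C (by simp)).head?_eq

theorem getLast?_ne (h : IsBlockDecomp a Bs w) : w.getLast? ≠ some a := by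
  obtain ⟨rfl, hBs⟩ := h
  rcases List.eq_nil_or_concat Bs with rfl | ⟨Cs, C, rfl⟩
  · simp
  have hC := hBs C (by simp)
  rw [List.concat_eq_append, List.flatten_concat, List.getLast?_append_of_ne_nil _ hC.ne_nil]
  exact hC.getLast?_ne

theorem length_le (h : IsBlockDecomp a (B :: Bs) w) : B.length ≤ w.length := by
  simp [h.1]

theorem rotate_length (h : IsBlockDecomp a (B :: Bs) w) :
    IsBlockDecomp a (Bs ++ [B]) (w.rotate B.length) := by
  refine ⟨by simp [h.1, List.rotate_append_length_eq], fun C hC => h.2 C ?_⟩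
  simp only [List.mem_append, List.mem_singleton] at hC
  rcases hC with hC | rfl
  · simp [hC]
  · simp

theorem getElem?_sub_one (h : IsBlockDecomp a (B :: Bs) w) {q : ℕ} (hq : 0 < q)
    (hqB : q < B.length) (hwq : w[q]? = some a) : w[q - 1]? = some a := by
  rw [h.1, List.flatten_cons] at hwq ⊢
  rw [List.getElem?_append_left hqB] at hwq
  rw [List.getElem?_append_left (by omega)]
  exact (h.2 B (by simp)).getElem?_sub_one hq hwq

theorem getElem?_length_sub_one_ne (h : IsBlockDecomp a (B :: Bs) w) :
    w[B.length - 1]? ≠ some a := by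
  have hB := h.2 B (by simp)
  rw [h.1, List.flatten_cons, List.getElem?_append_left
    (by have := List.length_pos_iff.mpr hB.ne_nil; omega), ← List.getLast?_eq_getElem?]
  exact hB.getLast?_ne

theorem getElem?_length (h : IsBlockDecomp a (B :: Bs) w) (hlt : B.length < w.length) :
    w[B.length]? = some a := by
  have htail : IsBlockDecomp a Bs Bs.flatten := ⟨rfl, fun C hC => h.2 C (by simp [hC])⟩
  rw [h.1, List.flatten_cons] at hlt ⊢
  rw [List.getElem?_append_right le_rfl, Nat.sub_self, ← List.head?_eq_getElem?]
  rw [List.length_append] at hlt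
  exact htail.head?_eq (List.ne_nil_of_length_pos (by omega))

end IsBlockDecomp

section LinearOrder

variable [LinearOrder A] {a : A} {v w : List A}

theorem Smallest.unique {b : A} (ha : Smallest a w) (hb : Smallest b w) : a = b :=
  le_antisymm (ha.2 b hb.1) (hb.2 a ha.1)

theorem smallest_rotate_iff {i : ℕ} : Smallest a (w.rotate i) ↔ Smallest a w := by
  simp only [Smallest, List.mem_rotate]

theorem InW.head?_eq (hv : InW v) (ha : Smallest a v) : v.head? = some a := by
  obtain ⟨hp, b, Bs, hb, hdec⟩ := hv
  obtain rfl := hb.unique ha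
  exact hdec.head?_eq hp.1

theorem InW.getLast?_ne (hv : InW v) (ha : Smallest a v) : v.getLast? ≠ some a := by
  obtain ⟨-, b, Bs, hb, hdec⟩ := hv
  obtain rfl := hb.unique ha
  exact hdec.getLast?_ne

def runStarts (v : List A) : Set ℕ :=
  {i | i < v.length ∧ ∃ a, Smallest a v ∧ v[i]? = some a ∧ (i = 0 ∨ v[i - 1]? ≠ some a)}

theorem mem_runStarts_iff (ha : Smallest a v) {i : ℕ} :
    i ∈ runStarts v ↔ i < v.length ∧ v[i]? = some a ∧ (i = 0 ∨ v[i - 1]? ≠ some a) := by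
  refine ⟨fun ⟨hi, b, hb, hvi⟩ => ?_, fun ⟨hi, hvi⟩ => ⟨hi, a, ha, hvi⟩⟩
  obtain rfl := hb.unique ha
  exact ⟨hi, hvi⟩

theorem phi_of_inW (h : InW v) : phi v = v := by
  rw [phi, if_pos h]

theorem phi_of_isGreatest {s : ℕ} (h : ¬ InW v) (hs : IsGreatest (runStarts v) s) :
    phi v = v.rotate s := by
  rw [phi, if_neg h, ← hs.csSup_eq]
  rfl

theorem exists_phi_eq_rotate (h : ¬ InW v) :
    ∃ s, phi v = v.rotate s ∧ (s = 0 ∨ IsGreatest (runStarts v) s) := by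
  rcases (runStarts v).eq_empty_or_nonempty with hS | hS
  · refine ⟨0, ?_, Or.inl rfl⟩
    rw [phi, if_neg h]
    change v.rotate (sSup (runStarts v)) = _
    rw [hS, csSup_empty, bot_eq_zero, List.rotate_zero]
  · have hbdd : BddAbove (runStarts v) := ⟨v.length, fun i hi => hi.1.le⟩
    have hgr : IsGreatest (runStarts v) (sSup (runStarts v)) :=
      ⟨Nat.sSup_mem hS hbdd, fun i hi => le_csSup hbdd hi⟩
    exact ⟨_, phi_of_isGreatest h hgr, Or.inr hgr⟩

end LinearOrder

section FirstBlock

variable [LinearOrder A] {a : A} {w B : List A} {Bs : List (List A)} {r : ℕ}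

theorem not_inW_rotate (hsm : Smallest a w) (hdec : IsBlockDecomp a (B :: Bs) w) (hr0 : 0 < r)
    (hrB : r < B.length) : ¬ InW (w.rotate r) := by
  have hBw := hdec.length_le
  have ha : Smallest a (w.rotate r) := smallest_rotate_iff.mpr hsm
  intro hv
  by_cases hwr : w[r]? = some a
  · apply hv.getLast?_ne ha
    rw [List.getLast?_eq_getElem?, List.length_rotate,
      List.getElem?_rotate_of_le_add (by omega) (by omega) (by omega),
      show w.length - 1 + r - w.length = r - 1 by omega]
    exact hdec.getElem?_sub_one hr0 hrB hwr
  · exact hwr (by rw [← List.head?_rotate (by omega)]; exact hv.head?_eq ha)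

theorem isGreatest_runStarts_rotate (hsm : Smallest a w) (hdec : IsBlockDecomp a (B :: Bs) w)
    (hr0 : 0 < r) (hrB : r < B.length) :
    IsGreatest (runStarts (w.rotate r)) (w.length - r) := by
  have hBw := hdec.length_le
  have hw : w ≠ [] := List.ne_nil_of_length_pos (by omega)
  simp only [IsGreatest, upperBounds, mem_runStarts_iff (smallest_rotate_iff.mpr hsm),
    List.length_rotate, Set.mem_ofPred_eq]
  refine ⟨⟨by omega, ?_, Or.inr ?_⟩, fun i ⟨hi, hvi, hprev⟩ => ?_⟩
  · rw [List.getElem?_rotate_of_le_add (by omega) (by omega) (by omega),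
      show w.length - r + r - w.length = 0 by omega, ← List.head?_eq_getElem?]
    exact hdec.head?_eq hw
  · rw [List.getElem?_rotate_of_add_lt (by omega),
      show w.length - r - 1 + r = w.length - 1 by omega, ← List.getLast?_eq_getElem?]
    exact hdec.getLast?_ne
  · by_contra! hlt
    rw [List.getElem?_rotate_of_le_add hi (by omega) (by omega)] at hvi
    refine hprev.elim (by omega) fun hne => hne ?_
    rw [List.getElem?_rotate_of_le_add (by omega) (by omega) (by omega),
      show i - 1 + r - w.length = i + r - w.length - 1 by omega]
    exact hdec.getElem?_sub_one (by omega) (by omega) hvi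

theorem phi_rotate (hw : Primitive w) (hsm : Smallest a w) (hdec : IsBlockDecomp a (B :: Bs) w)
    (hrB : r < B.length) : phi (w.rotate r) = w := by
  rcases Nat.eq_zero_or_pos r with rfl | hr0
  · rw [List.rotate_zero, phi_of_inW ⟨hw, a, B :: Bs, hsm, hdec⟩]
  have hBw := hdec.length_le
  rw [phi_of_isGreatest (not_inW_rotate hsm hdec hr0 hrB)
      (isGreatest_runStarts_rotate hsm hdec hr0 hrB), List.rotate_rotate,
    Nat.add_sub_cancel' (by omega), List.rotate_length]

theorem exists_rotate_eq_of_phi_eq (hw : Primitive w) (hsm : Smallest a w)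
    (hdec : IsBlockDecomp a (B :: Bs) w) {v : List A} (hv : Primitive v) (hphi : phi v = w) :
    ∃ r < B.length, w.rotate r = v := by
  have hB0 : 0 < B.length := List.length_pos_iff.mpr (hdec.2 B (by simp)).ne_nil
  by_cases hvW : InW v
  · exact ⟨0, hB0, by rw [List.rotate_zero, ← hphi, phi_of_inW hvW]⟩
  obtain ⟨s, hs, hs'⟩ := exists_phi_eq_rotate hvW
  rw [hs] at hphi
  have hva : Smallest a v := smallest_rotate_iff.mp (hphi ▸ hsm)
  rcases hs' with rfl | hgr
  · rw [List.rotate_zero] at hphi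
    exact absurd (hphi ▸ ⟨hw, a, B :: Bs, hsm, hdec⟩) hvW
  have hsv := ((mem_runStarts_iff hva).mp hgr.1).1
  have hvr : w.rotate (w.length - s) = v := by
    rw [← hphi, List.rotate_rotate, List.length_rotate, Nat.add_sub_cancel' hsv.le,
      List.rotate_length]
  refine ⟨w.length - s, ?_, hvr⟩
  by_contra! hle
  rcases hle.eq_or_lt with heq | hlt
  · refine hvW ⟨hv, a, Bs ++ [B], hva, ?_⟩
    rw [← hvr, ← heq]
    exact hdec.rotate_length
  · have hlater : s + B.length ∈ runStarts v := by
      rw [mem_runStarts_iff hva, ← hvr, List.length_rotate]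
      refine ⟨by omega, ?_, Or.inr ?_⟩
      · rw [List.getElem?_rotate_of_le_add (by omega) (by omega) (by omega),
          show s + B.length + (w.length - s) - w.length = B.length by omega]
        exact hdec.getElem?_length (by omega)
      · rw [List.getElem?_rotate_of_le_add (by omega) (by omega) (by omega),
          show s + B.length - 1 + (w.length - s) - w.length = B.length - 1 by omega]
        exact hdec.getElem?_length_sub_one_ne
    have := hgr.2 hlater
    omega

theorem preimage_phi (hw : Primitive w) (hsm : Smallest a w)
    (hdec : IsBlockDecomp a (B :: Bs) w) :
    {v | Primitive v ∧ v.length = w.length ∧ phi v = w} = w.rotate '' Set.Iio B.length := by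
  ext v
  constructor
  · rintro ⟨hv, -, hphi⟩
    obtain ⟨r, hr, rfl⟩ := exists_rotate_eq_of_phi_eq hw hsm hdec hv hphi
    exact ⟨r, hr, rfl⟩
  · rintro ⟨r, hr, rfl⟩
    exact ⟨hw.rotate r, List.length_rotate w r, phi_rotate hw hsm hdec hr⟩

end FirstBlock

/-- `φ : P_n → W_n` is surjective, and the preimage of any `w ∈ W_n` has cardinality
equal to the length of the first block of `w`. -/
theorem stmt_8 [LinearOrder A] (n : ℕ) :
    (∀ w : List A, w.length = n → InW w →
      ∃ v : List A, Primitive v ∧ v.length = n ∧ phi v = w) ∧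
    (∀ (w : List A) (a : A) (B : List A) (Bs : List (List A)),
      w.length = n → Smallest a w → IsBlockDecomp a (B :: Bs) w → Primitive w →
      Set.ncard {v : List A | Primitive v ∧ v.length = n ∧ phi v = w} = B.length) := by
  refine ⟨fun w hlen hW => ⟨w, hW.1, hlen, phi_of_inW hW⟩, ?_⟩
  rintro w a B Bs rfl hsm hdec hw
  rw [preimage_phi hw hsm hdec,
    (hw.injOn_rotate.mono (Set.Iio_subset_Iio hdec.length_le)).ncard_image,
    Set.ncard_Iio_nat]
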